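/- Let μ be a Borel probability measure on Cantor space. Then there exists a Borel probability measure ν such that ν([σ]) is a dyadic rational for every string σ, ν([σ]) > 0 whenever μ([σ]) > 0, and for all σ: μ([σ])/2 < ν([σ]) ≤ (μ([σ]) + 2^{-|σ|})/2 · 2, in particular μ([σ]) < 2ν([σ]) for all σ. Moreover, if μ is atomless then ν can be chosen atomless. -/

import Mathlib

open MeasureTheory ENNReal

abbrev Cantor : Type := ℕ → Bool

def cyl (σ : List Bool) : Set Cantor := {x | ∀ i, i < σ.length → x i = σ.getD i false}

/-!
The values `ν[σ]` are chosen top-down along the binary tree, keeping the invariant that `ν[σ]` is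
dyadic with `μ[σ]/2 < ν[σ] < μ[σ]/2 + 2^-|σ|`. A value satisfying the invariant at `σ` can be split
as `ν[σ0] + ν[σ1]` with both halves satisfying it again, because the admissible range for `ν[σ0]`
is a nonempty open interval and dyadic rationals are dense. Nonnegative additive weights of total
mass one on the cylinders always come from a measure: cut `[0,1)` into nested intervals of lengths
`ν[σ]` and push Lebesgue measure forward along the map sending `t` to the branch whose intervals
contain it. Finally `ν{y} ≤ ν[y↾n] ≤ μ[y↾n] + 2^-n → μ{y}`, so `ν` is atomless when `μ` is.
-/

open Filter Topology

section Cylinders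

theorem mem_cyl_iff {x : Cantor} {σ : List Bool} :
    x ∈ cyl σ ↔ ∀ i (hi : i < σ.length), x i = σ[i] := by
  simp +contextual [cyl]

theorem mem_cyl_iff_ofFn {x : Cantor} {σ : List Bool} :
    x ∈ cyl σ ↔ List.ofFn (fun i : Fin σ.length => x i) = σ := by
  simp [mem_cyl_iff, List.ext_get_iff]

theorem cyl_nil : cyl [] = Set.univ := by
  simp [Set.eq_univ_iff_forall, mem_cyl_iff]

theorem mem_cyl_concat {x : Cantor} {σ : List Bool} {b : Bool} :
    x ∈ cyl (σ ++ [b]) ↔ x ∈ cyl σ ∧ x σ.length = b := by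
  simp only [mem_cyl_iff_ofFn, List.length_append, List.length_singleton, List.ofFn_succ',
    List.concat_eq_append, List.append_singleton_inj, Fin.val_cast, Fin.val_castSucc,
    Fin.val_last]

theorem measurableSet_cyl (σ : List Bool) : MeasurableSet (cyl σ) := by
  have : cyl σ = ⋂ i : Fin σ.length, (fun x : Cantor => x i) ⁻¹' {σ[i]} := by
    ext x; simp [mem_cyl_iff, Fin.forall_iff]
  rw [this]
  exact .iInter fun i => measurable_pi_apply _ (.singleton _)

theorem measure_cyl_eq_add (μ : Measure Cantor) (σ : List Bool) :
    μ (cyl σ) = μ (cyl (σ ++ [false])) + μ (cyl (σ ++ [true])) := by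
  have hunion : cyl σ = cyl (σ ++ [false]) ∪ cyl (σ ++ [true]) := by
    ext x; cases h : x σ.length <;> simp [mem_cyl_concat, h]
  have hdisj : Disjoint (cyl (σ ++ [false])) (cyl (σ ++ [true])) :=
    Set.disjoint_left.2 fun x h₀ h₁ => by
      simp only [mem_cyl_concat] at h₀ h₁; simp [h₀.2] at h₁
  rw [hunion, measure_union hdisj (measurableSet_cyl _)]

theorem mem_cyl_ofFn {x y : Cantor} {n : ℕ} :
    x ∈ cyl (List.ofFn fun i : Fin n => y i) ↔ ∀ i < n, x i = y i := by
  simp [mem_cyl_iff]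

theorem tendsto_measure_cyl_ofFn (μ : Measure Cantor) [IsFiniteMeasure μ] (y : Cantor) :
    Tendsto (fun n => μ (cyl (List.ofFn fun i : Fin n => y i))) atTop (𝓝 (μ {y})) := by
  have hanti : Antitone fun n => cyl (List.ofFn fun i : Fin n => y i) :=
    fun m n hmn x hx => mem_cyl_ofFn.2 fun i hi => mem_cyl_ofFn.1 hx i (hi.trans_le hmn)
  have hinter : ⋂ n, cyl (List.ofFn fun i : Fin n => y i) = {y} := by
    ext x
    simp only [Set.mem_iInter, mem_cyl_ofFn, Set.mem_singleton_iff]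
    exact ⟨fun h => funext fun i => h (i + 1) i i.lt_succ_self, fun h _ _ _ => h ▸ rfl⟩
  rw [← hinter]
  exact tendsto_measure_iInter_atTop (fun n => (measurableSet_cyl _).nullMeasurableSet) hanti
    ⟨0, measure_ne_top μ _⟩

theorem measure_singleton_le_of_measure_cyl_le {μ ν : Measure Cantor} [IsFiniteMeasure μ]
    [IsFiniteMeasure ν] (h : ∀ σ, ν (cyl σ) ≤ μ (cyl σ) + (2 ^ σ.length)⁻¹) (y : Cantor) :
    ν {y} ≤ μ {y} := by
  have hpow : Tendsto (fun n : ℕ => ((2 : ℝ≥0∞) ^ n)⁻¹) atTop (𝓝 0) := by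
    simpa only [ENNReal.inv_pow] using
      ENNReal.tendsto_pow_atTop_nhds_zero_of_lt_one (by norm_num : (2 : ℝ≥0∞)⁻¹ < 1)
  refine le_of_tendsto_of_tendsto' (tendsto_measure_cyl_ofFn ν y)
    (by simpa using (tendsto_measure_cyl_ofFn μ y).add hpow) fun n => ?_
  simpa using h (List.ofFn fun i : Fin n => y i)

end Cylinders

def IsDyadic (x : ℝ) : Prop := ∃ m k : ℕ, x = m / 2 ^ k

theorem IsDyadic.sub {x y : ℝ} (hx : IsDyadic x) (hy : IsDyadic y) (hyx : y ≤ x) :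
    IsDyadic (x - y) := by
  obtain ⟨m, k, rfl⟩ := hx
  obtain ⟨m', k', rfl⟩ := hy
  have hle : m' * 2 ^ k ≤ m * 2 ^ k' := by
    rw [div_le_div_iff₀ (by positivity) (by positivity)] at hyx
    exact_mod_cast hyx
  refine ⟨m * 2 ^ k' - m' * 2 ^ k, k + k', ?_⟩
  push_cast [Nat.cast_sub hle]
  field_simp
  ring

theorem exists_isDyadic_btwn {a b : ℝ} (ha : 0 ≤ a) (hab : a < b) :
    ∃ x, IsDyadic x ∧ a < x ∧ x < b := by
  obtain ⟨k, hk⟩ := exists_pow_lt_of_lt_one (sub_pos.2 hab) (by norm_num : (2⁻¹ : ℝ) < 1)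
  have h2k : (0 : ℝ) < 2 ^ k := by positivity
  refine ⟨(⌊a * 2 ^ k⌋₊ + 1 : ℕ) / 2 ^ k, ⟨_, k, rfl⟩, ?_, ?_⟩
  · rw [lt_div_iff₀ h2k]
    exact_mod_cast Nat.lt_floor_add_one (a * 2 ^ k)
  · have hfloor : (⌊a * 2 ^ k⌋₊ : ℝ) ≤ a * 2 ^ k := Nat.floor_le (by positivity)
    rw [inv_pow] at hk
    calc ((⌊a * 2 ^ k⌋₊ + 1 : ℕ) : ℝ) / 2 ^ k ≤ (a * 2 ^ k + 1) / 2 ^ k := by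
          gcongr; push_cast; linarith
      _ = a + (2 ^ k)⁻¹ := by field_simp
      _ < b := by linarith

theorem IsDyadic.exists_ofReal_eq {x : ℝ} (hx : IsDyadic x) :
    ∃ m n : ℕ, ENNReal.ofReal x = (m : ℝ≥0∞) / 2 ^ n := by
  obtain ⟨m, n, rfl⟩ := hx
  refine ⟨m, n, ?_⟩
  rw [ofReal_div_of_pos (by positivity), ofReal_natCast, ofReal_pow zero_le_two, ofReal_ofNat]

structure CylinderWeights where
  weight : List Bool → ℝ
  nonneg : ∀ σ, 0 ≤ weight σ
  weight_nil : weight [] = 1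
  weight_split : ∀ σ, weight (σ ++ [false]) + weight (σ ++ [true]) = weight σ

namespace CylinderWeights

variable (W : CylinderWeights)

noncomputable def left (σ : List Bool) : ℝ :=
  σ.reverseRecOn 0 fun τ b l => bif b then l + W.weight (τ ++ [false]) else l

def interval (σ : List Bool) : Set ℝ := Set.Ico (W.left σ) (W.left σ + W.weight σ)

noncomputable def digit (σ : List Bool) (t : ℝ) : Bool :=
  decide (W.left σ + W.weight (σ ++ [false]) ≤ t)

noncomputable def path (t : ℝ) : ℕ → List Bool
  | 0 => []
  | n + 1 => path t n ++ [W.digit (path t n) t]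

noncomputable def toCantor (t : ℝ) : Cantor := fun n => W.digit (W.path t n) t

theorem left_concat (σ : List Bool) (b : Bool) :
    W.left (σ ++ [b]) = bif b then W.left σ + W.weight (σ ++ [false]) else W.left σ := by
  rw [left, left, List.reverseRecOn_concat]

theorem interval_nil : W.interval [] = Set.Ico 0 1 := by
  simp [interval, left, W.weight_nil]

theorem mem_interval_concat {σ : List Bool} {b : Bool} {t : ℝ} :
    t ∈ W.interval (σ ++ [b]) ↔ t ∈ W.interval σ ∧ W.digit σ t = b := by
  have h₀ := W.nonneg (σ ++ [false])
  have h₁ := W.nonneg (σ ++ [true])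
  have hsplit := W.weight_split σ
  cases b <;>
  · simp only [interval, digit, left_concat, Set.mem_Ico, cond_false, cond_true,
      decide_eq_false_iff_not, decide_eq_true_eq, not_le]
    grind

theorem interval_subset_nil (σ : List Bool) : W.interval σ ⊆ Set.Ico 0 1 := by
  induction σ using List.reverseRecOn with
  | nil => rw [interval_nil]
  | append_singleton τ b ih => exact fun t ht => ih (W.mem_interval_concat.1 ht).1

theorem path_length_eq_iff {t : ℝ} (ht : t ∈ Set.Ico 0 1) {σ : List Bool} :
    W.path t σ.length = σ ↔ t ∈ W.interval σ := by
  induction σ using List.reverseRecOn with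
  | nil => simp [path, interval_nil, ht]
  | append_singleton τ b ih =>
    rw [List.length_append, List.length_singleton, path, List.append_singleton_inj,
      W.mem_interval_concat, ← ih]
    constructor
    · rintro ⟨hτ, hb⟩; exact ⟨hτ, by rwa [hτ] at hb⟩
    · rintro ⟨hτ, hb⟩; exact ⟨hτ, by rwa [hτ]⟩

theorem path_eq_ofFn (t : ℝ) (n : ℕ) :
    W.path t n = List.ofFn fun i : Fin n => W.toCantor t i := by
  induction n with
  | zero => rfl
  | succ n ih =>
    rw [path, List.ofFn_succ', List.concat_eq_append]
    exact congrArg (· ++ [W.toCantor t n]) ih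

theorem toCantor_mem_cyl_iff {t : ℝ} (ht : t ∈ Set.Ico 0 1) {σ : List Bool} :
    W.toCantor t ∈ cyl σ ↔ t ∈ W.interval σ := by
  rw [mem_cyl_iff_ofFn, ← path_eq_ofFn, W.path_length_eq_iff ht]

theorem measurable_digit (σ : List Bool) : Measurable (W.digit σ) :=
  measurable_to_countable' fun b => by
    cases b
    · convert measurableSet_Iio (a := W.left σ + W.weight (σ ++ [false])); ext; simp [digit]
    · convert measurableSet_Ici (a := W.left σ + W.weight (σ ++ [false])); ext; simp [digit]

theorem measurableSet_path_eq (n : ℕ) (σ : List Bool) : MeasurableSet {t | W.path t n = σ} := by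
  induction n generalizing σ with
  | zero => exact .const ([] = σ)
  | succ n ih =>
    have : {t | W.path t (n + 1) = σ} =
        ⋃ τ, {t | W.path t n = τ} ∩ W.digit τ ⁻¹' {b | τ ++ [b] = σ} := by
      ext t; simp [path]
    rw [this]
    exact .iUnion fun τ => (ih τ).inter (W.measurable_digit τ .of_discrete)

theorem measurable_toCantor : Measurable W.toCantor := by
  refine measurable_pi_lambda _ fun n s _ => ?_
  have : (fun t => W.toCantor t n) ⁻¹' s = ⋃ τ, {t | W.path t n = τ} ∩ W.digit τ ⁻¹' s := by
    ext t; simp [toCantor]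
  rw [this]
  exact .iUnion fun τ => (W.measurableSet_path_eq n τ).inter (W.measurable_digit τ .of_discrete)

noncomputable def measure : Measure Cantor := (volume.restrict (Set.Ico 0 1)).map W.toCantor

theorem measure_cyl (σ : List Bool) : W.measure (cyl σ) = ENNReal.ofReal (W.weight σ) := by
  have : W.toCantor ⁻¹' cyl σ ∩ Set.Ico 0 1 = W.interval σ := by
    ext t
    constructor
    · rintro ⟨h, ht⟩; exact (W.toCantor_mem_cyl_iff ht).1 h
    · intro h
      have ht := W.interval_subset_nil σ h
      exact ⟨(W.toCantor_mem_cyl_iff ht).2 h, ht⟩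
  rw [measure, Measure.map_apply W.measurable_toCantor (measurableSet_cyl σ),
    Measure.restrict_apply (W.measurable_toCantor (measurableSet_cyl σ)), this, interval,
    Real.volume_Ico, add_sub_cancel_left]

instance : IsProbabilityMeasure W.measure :=
  ⟨by rw [← cyl_nil, measure_cyl, weight_nil, ofReal_one]⟩

end CylinderWeights

section DyadicApproximation

def IsDyadicApprox (μ : Measure Cantor) (σ : List Bool) (x : ℝ) : Prop :=
  IsDyadic x ∧ (μ (cyl σ)).toReal / 2 < x ∧ x < (μ (cyl σ)).toReal / 2 + (2 ^ σ.length)⁻¹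

theorem isDyadicApprox_nil (μ : Measure Cantor) [IsProbabilityMeasure μ] :
    IsDyadicApprox μ [] 1 :=
  ⟨⟨1, 0, by norm_num⟩, by norm_num [cyl_nil]⟩

variable {μ : Measure Cantor} {σ : List Bool} {x : ℝ}

theorem IsDyadicApprox.pos (h : IsDyadicApprox μ σ x) : 0 < x :=
  lt_of_le_of_lt (by positivity) h.2.1

/-- Writing `e = 2^-(|σ|+1)`, the first half `y` must lie within `e` above `μ[σ0]/2` and `x - y`
within `e` above `μ[σ1]/2`; these constraints are compatible because `μ[σ]/2 < x < μ[σ]/2 + 2e`. -/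
theorem IsDyadicApprox.exists_split [IsFiniteMeasure μ] (h : IsDyadicApprox μ σ x) :
    ∃ y, IsDyadicApprox μ (σ ++ [false]) y ∧ IsDyadicApprox μ (σ ++ [true]) (x - y) := by
  obtain ⟨hx, hlow, hupp⟩ := h
  simp only [IsDyadicApprox, List.length_append, List.length_singleton]
  set m₀ := (μ (cyl (σ ++ [false]))).toReal
  set m₁ := (μ (cyl (σ ++ [true]))).toReal
  set e : ℝ := (2 ^ (σ.length + 1))⁻¹
  have hsum : (μ (cyl σ)).toReal = m₀ + m₁ := by
    rw [measure_cyl_eq_add μ σ, toReal_add (measure_ne_top _ _) (measure_ne_top _ _)]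
  have he : ((2 : ℝ) ^ σ.length)⁻¹ = 2 * e := by
    simp only [e, pow_succ]; field_simp
  have hm₀ : 0 ≤ m₀ := toReal_nonneg
  have hm₁ : 0 ≤ m₁ := toReal_nonneg
  rw [hsum] at hlow
  rw [hsum, he] at hupp
  obtain ⟨y, hy, hlo, hhi⟩ := exists_isDyadic_btwn (le_max_of_le_left (by positivity))
    (show max (m₀ / 2) (x - m₁ / 2 - e) < min (m₀ / 2 + e) (x - m₁ / 2) by
      apply max_lt <;> apply lt_min <;> linarith)
  rw [max_lt_iff] at hlo
  rw [lt_min_iff] at hhi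
  exact ⟨y, ⟨hy, by linarith, by linarith⟩, ⟨hx.sub hy (by linarith), by linarith, by linarith⟩⟩

theorem IsDyadicApprox.half_lt_ofReal [IsFiniteMeasure μ] (h : IsDyadicApprox μ σ x) :
    μ (cyl σ) / 2 < ENNReal.ofReal x := by
  rw [← ofReal_toReal (measure_ne_top μ (cyl σ)), ← ofReal_ofNat 2,
    ← ofReal_div_of_pos two_pos]
  exact (ofReal_lt_ofReal_iff h.pos).2 h.2.1

theorem IsDyadicApprox.ofReal_le [IsFiniteMeasure μ] (h : IsDyadicApprox μ σ x) :
    ENNReal.ofReal x ≤ μ (cyl σ) + (2 ^ σ.length)⁻¹ := by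
  rw [← ofReal_toReal (measure_ne_top μ (cyl σ)), ← ofReal_ofNat 2, ← ofReal_pow zero_le_two,
    ← ofReal_inv_of_pos (by positivity), ← ofReal_add toReal_nonneg (by positivity)]
  exact ofReal_le_ofReal (by linarith [h.2.2, toReal_nonneg (a := μ (cyl σ))])

variable (μ) [IsProbabilityMeasure μ]

noncomputable def dyadicApprox (σ : List Bool) : {x : ℝ // IsDyadicApprox μ σ x} :=
  σ.reverseRecOn ⟨1, isDyadicApprox_nil μ⟩ fun _ b x =>
    have h := x.2.exists_split.choose_spec
    match b with
    | false => ⟨_, h.1⟩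
    | true => ⟨_, h.2⟩

noncomputable def dyadicWeights : CylinderWeights where
  weight σ := dyadicApprox μ σ
  nonneg σ := (dyadicApprox μ σ).2.pos.le
  weight_nil := by simp [dyadicApprox]
  weight_split σ := by simp [dyadicApprox]

end DyadicApproximation

theorem stmt_10 (μ : Measure Cantor) [IsProbabilityMeasure μ] :
    ∃ ν : Measure Cantor, IsProbabilityMeasure ν ∧
      (∀ σ : List Bool, ∃ m n : ℕ, ν (cyl σ) = (m : ℝ≥0∞) / 2 ^ n) ∧
      (∀ σ : List Bool, 0 < μ (cyl σ) → 0 < ν (cyl σ)) ∧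
      (∀ σ : List Bool,
        μ (cyl σ) / 2 < ν (cyl σ) ∧
        ν (cyl σ) ≤ (μ (cyl σ) + ((2:ℝ≥0∞) ^ σ.length)⁻¹) / 2 * 2) ∧
      (∀ σ : List Bool, μ (cyl σ) < 2 * ν (cyl σ)) ∧
      ((∀ y : Cantor, μ {y} = 0) → ∀ y : Cantor, ν {y} = 0) := by
  set ν := (dyadicWeights μ).measure
  have hcyl (σ : List Bool) : ν (cyl σ) = ENNReal.ofReal (dyadicApprox μ σ).1 :=
    (dyadicWeights μ).measure_cyl σ
  have hlow (σ : List Bool) : μ (cyl σ) / 2 < ν (cyl σ) :=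
    hcyl σ ▸ (dyadicApprox μ σ).2.half_lt_ofReal
  have hupp (σ : List Bool) : ν (cyl σ) ≤ μ (cyl σ) + (2 ^ σ.length)⁻¹ :=
    hcyl σ ▸ (dyadicApprox μ σ).2.ofReal_le
  refine ⟨ν, inferInstance, fun σ => hcyl σ ▸ (dyadicApprox μ σ).2.1.exists_ofReal_eq,
    fun σ _ => zero_le.trans_lt (hlow σ),
    fun σ => ⟨hlow σ, by rw [ENNReal.div_mul_cancel two_ne_zero ofNat_ne_top]; exact hupp σ⟩,
    fun σ => ?_, fun hμ y => ?_⟩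
  · simpa only [ENNReal.div_lt_iff (Or.inl two_ne_zero) (Or.inl ofNat_ne_top), mul_comm]
      using hlow σ
  · exact le_antisymm ((measure_singleton_le_of_measure_cyl_le hupp y).trans (hμ y).le)
      zero_le
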